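/- arXiv:2104.00300 — 4 statements merged into one kernel-verified Lean document; each statement's English description precedes it below -/
import Mathlib

section
/- Let Φ(ρ) = ∑_i K_i ρ K_i† be a quantum channel on ℂ^n given by a finite family of Kraus operators K_i satisfying ∑_i K_i† K_i = I (trace preservation) and ∑_i K_i K_i† = I (unitality). Suppose σ is a positive definite Hermitian n×n matrix with Φ(σ) = σ. Then for every eigenvalue λ of σ, letting Π be the orthogonal projection onto the eigenspace ker(σ − λI), one has Φ(Π) = Π, and moreover Π K_i = K_i Π for every Kraus operator K_i. -/
open scoped Matrix Kronecker BigOperators Classical ComplexOrder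

/-- A density matrix: positive semidefinite with unit trace. -/
noncomputable def IsDensity {n : Type*} [Fintype n] (ρ : Matrix n n ℂ) : Prop :=
  ρ.PosSemidef ∧ ρ.trace = 1

/-- A unitary matrix. -/
noncomputable def IsUnitary {n : Type*} [Fintype n] [DecidableEq n] (U : Matrix n n ℂ) : Prop :=
  U * Uᴴ = 1 ∧ Uᴴ * U = 1

/-- Partial trace over the first tensor factor. -/
noncomputable def trFst {α β : Type*} [Fintype α] (M : Matrix (α × β) (α × β) ℂ) : Matrix β β ℂ :=
  Matrix.of fun k l => ∑ i, M (i, k) (i, l)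

/-- Partial trace over the second tensor factor. -/
noncomputable def trSnd {α β : Type*} [Fintype β] (M : Matrix (α × β) (α × β) ℂ) : Matrix α α ℂ :=
  Matrix.of fun i j => ∑ k, M (i, k) (j, k)

/-- Partial trace over the third factor of a tripartite system. -/
noncomputable def trThird {α β γ : Type*} [Fintype γ] (M : Matrix (α × β × γ) (α × β × γ) ℂ) :
    Matrix (α × β) (α × β) ℂ :=
  Matrix.of fun p q => ∑ k, M (p.1, p.2, k) (q.1, q.2, k)

/-- von Neumann entropy (base-2), with the convention `0 log 0 = 0`. -/
noncomputable def vnEntropy {n : Type*} [Fintype n] [DecidableEq n] (ρ : Matrix n n ℂ) : ℝ :=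
  if h : ρ.IsHermitian then -∑ i, h.eigenvalues i * Real.logb 2 (h.eigenvalues i) else 0

/-- Largest eigenvalue of a (Hermitian) matrix. -/
noncomputable def maxEig {n : Type*} [Fintype n] [DecidableEq n] (ρ : Matrix n n ℂ) : ℝ :=
  if h : ρ.IsHermitian then ⨆ i, h.eigenvalues i else 0

/-- Min-entropy of a density matrix. -/
noncomputable def minEntropy {n : Type*} [Fintype n] [DecidableEq n] (ρ : Matrix n n ℂ) : ℝ :=
  -Real.logb 2 (maxEig ρ)

/-- Rényi entropy of order `α` (base 2). -/
noncomputable def renyiEntropy {n : Type*} [Fintype n] [DecidableEq n] (α : ℝ)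
    (ρ : Matrix n n ℂ) : ℝ :=
  if h : ρ.IsHermitian then (1 - α)⁻¹ * Real.logb 2 (∑ i, h.eigenvalues i ^ α) else 0

/-- Partial transpose over the first tensor factor. -/
noncomputable def ptFst {α β : Type*} (U : Matrix (α × β) (α × β) ℂ) : Matrix (α × β) (α × β) ℂ :=
  Matrix.of fun p q => U (q.1, p.2) (p.1, q.2)

/-- Swap the two parties of a bipartite matrix. -/
noncomputable def swapParties {α β : Type*} (U : Matrix (α × β) (α × β) ℂ) : Matrix (β × α) (β × α) ℂ :=
  Matrix.of fun p q => U (p.2, p.1) (q.2, q.1)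

/-- `U` is compatible with the catalyst `σ`: there is a unitary `V` on `B` such that
`Tr_A (U (ρ ⊗ σ) U†) = V σ V†` for every density matrix `ρ` on `A`. -/
noncomputable def Compatible {dA dB : ℕ} (U : Matrix (Fin dA × Fin dB) (Fin dA × Fin dB) ℂ)
    (σ : Matrix (Fin dB) (Fin dB) ℂ) : Prop :=
  ∃ V : Matrix (Fin dB) (Fin dB) ℂ, IsUnitary V ∧
    ∀ ρ : Matrix (Fin dA) (Fin dA) ℂ, IsDensity ρ →
      trFst (U * (ρ ⊗ₖ σ) * Uᴴ) = V * σ * Vᴴ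

/-- The unitary `1_m ⊗ U` on `ℂ^m ⊗ ℂ^{dA} ⊗ ℂ^{dB}`, indexed as `(Fin m × Fin dA) × Fin dB`. -/
noncomputable def extUnitary {m dA dB : ℕ} (U : Matrix (Fin dA × Fin dB) (Fin dA × Fin dB) ℂ) :
    Matrix ((Fin m × Fin dA) × Fin dB) ((Fin m × Fin dA) × Fin dB) ℂ :=
  Matrix.of fun p q => if p.1.1 = q.1.1 then U (p.1.2, p.2) (q.1.2, q.2) else 0

private lemma trace_self_mul_conjTranspose {n : ℕ} (A : Matrix (Fin n) (Fin n) ℂ) :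
    (A * Aᴴ).trace = ((∑ i, ∑ j, Complex.normSq (A i j) : ℝ) : ℂ) := by
  simp [Matrix.trace, Matrix.diag, Matrix.mul_apply, Matrix.conjTranspose_apply,
    Complex.mul_conj]

private lemma matrix_ext_mulVec {n : ℕ} {A B : Matrix (Fin n) (Fin n) ℂ}
    (h : ∀ v, A.mulVec v = B.mulVec v) : A = B := by
  ext i j
  have := congr_fun (h (Pi.single j 1)) i
  simpa [Matrix.mulVec_single_one] using this

/-- Lemma 1: a unital channel fixing a positive definite matrix fixes its eigenprojections,
and the eigenprojections commute with every Kraus operator. -/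
theorem stmt1 {n N : ℕ} (K : Fin N → Matrix (Fin n) (Fin n) ℂ)
    (htp : ∑ i, (K i)ᴴ * K i = 1) (hunital : ∑ i, K i * (K i)ᴴ = 1)
    (σ : Matrix (Fin n) (Fin n) ℂ) (hpd : σ.PosDef)
    (hfix : ∑ i, K i * σ * (K i)ᴴ = σ)
    (lam : ℝ) (hev : ∃ v : Fin n → ℂ, v ≠ 0 ∧ σ.mulVec v = (lam : ℂ) • v)
    (P : Matrix (Fin n) (Fin n) ℂ) (hPherm : P.IsHermitian) (hPproj : P * P = P)
    (hPrange : ∀ v : Fin n → ℂ, P.mulVec v = v ↔ σ.mulVec v = (lam : ℂ) • v) :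
    (∑ i, K i * P * (K i)ᴴ = P) ∧ ∀ i, P * K i = K i * P := by
  have hσH : σ.IsHermitian := hpd.isHermitian
  -- Step 1: each Kraus operator commutes with σ
  set C : Fin N → Matrix (Fin n) (Fin n) ℂ := fun i => K i * σ - σ * K i with hC
  have hCH : ∀ i, (C i)ᴴ = σ * (K i)ᴴ - (K i)ᴴ * σ := by
    intro i
    simp [hC, Matrix.conjTranspose_sub, Matrix.conjTranspose_mul, hσH.eq]
  have hsum : ∑ i, C i * (C i)ᴴ = (∑ i, K i * (σ * σ) * (K i)ᴴ) - σ * σ := by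
    have expand : ∀ i, C i * (C i)ᴴ =
        K i * (σ * σ) * (K i)ᴴ - (K i * σ * (K i)ᴴ) * σ - σ * (K i * σ * (K i)ᴴ)
          + σ * (K i * (K i)ᴴ) * σ := by
      intro i
      rw [hCH]
      simp only [hC]
      noncomm_ring
    calc ∑ i, C i * (C i)ᴴ
        = (∑ i, K i * (σ * σ) * (K i)ᴴ) - (∑ i, K i * σ * (K i)ᴴ) * σ
          - σ * (∑ i, K i * σ * (K i)ᴴ) + σ * (∑ i, K i * (K i)ᴴ) * σ := by
          simp only [expand, Finset.sum_add_distrib, Finset.sum_sub_distrib,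
            Finset.sum_mul, Finset.mul_sum]
      _ = (∑ i, K i * (σ * σ) * (K i)ᴴ) - σ * σ := by
          rw [hfix, hunital]; noncomm_ring
  have htr : (∑ i, C i * (C i)ᴴ).trace = 0 := by
    rw [hsum, Matrix.trace_sub, Matrix.trace_sum]
    have : ∀ i, (K i * (σ * σ) * (K i)ᴴ).trace = ((K i)ᴴ * K i * (σ * σ)).trace := by
      intro i
      rw [Matrix.trace_mul_cycle]
    rw [Finset.sum_congr rfl fun i _ => this i, ← Matrix.trace_sum, ← Finset.sum_mul, htp,
      one_mul]
    ring
  have hC0 : ∀ i, C i = 0 := by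
    have htr' : ∑ i, ((∑ a, ∑ b, Complex.normSq (C i a b) : ℝ) : ℂ) = 0 := by
      rw [← htr, Matrix.trace_sum]
      exact Finset.sum_congr rfl fun i _ => (trace_self_mul_conjTranspose (C i)).symm
    have hre : ∑ i, (∑ a, ∑ b, Complex.normSq (C i a b)) = 0 := by
      exact_mod_cast htr'
    intro i
    have hnn : ∀ j ∈ Finset.univ, (0:ℝ) ≤ ∑ a, ∑ b, Complex.normSq (C j a b) :=
      fun j _ => Finset.sum_nonneg fun a _ => Finset.sum_nonneg fun b _ =>
        Complex.normSq_nonneg _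
    have hzero := (Finset.sum_eq_zero_iff_of_nonneg hnn).mp hre i (Finset.mem_univ i)
    ext a b
    have := (Finset.sum_eq_zero_iff_of_nonneg
      (fun a _ => Finset.sum_nonneg fun b _ => Complex.normSq_nonneg (C i a b))).mp hzero a
      (Finset.mem_univ a)
    have := (Finset.sum_eq_zero_iff_of_nonneg
      (fun b _ => Complex.normSq_nonneg (C i a b))).mp this b (Finset.mem_univ b)
    simpa using Complex.normSq_eq_zero.mp this
  have hcomm : ∀ i, K i * σ = σ * K i := fun i => sub_eq_zero.mp (hC0 i)
  have hcommH : ∀ i, (K i)ᴴ * σ = σ * (K i)ᴴ := by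
    intro i
    have := congrArg Matrix.conjTranspose (hcomm i)
    simpa [Matrix.conjTranspose_mul, hσH.eq] using this.symm
  -- Step 2: P invariance under each K
  have hPfix : ∀ (A : Matrix (Fin n) (Fin n) ℂ), A * σ = σ * A → P * (A * P) = A * P := by
    intro A hA
    apply matrix_ext_mulVec
    intro v
    have hw : σ.mulVec (P.mulVec v) = (lam : ℂ) • P.mulVec v := by
      apply (hPrange _).mp
      rw [Matrix.mulVec_mulVec, hPproj]
    have : σ.mulVec (A.mulVec (P.mulVec v)) = (lam : ℂ) • A.mulVec (P.mulVec v) := by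
      rw [Matrix.mulVec_mulVec, ← hA, ← Matrix.mulVec_mulVec, hw, Matrix.mulVec_smul]
    have := (hPrange _).mpr this
    simpa [Matrix.mulVec_mulVec] using this
  have hKP : ∀ i, P * K i * P = K i * P := by
    intro i
    have := hPfix (K i) (hcomm i)
    rwa [← Matrix.mul_assoc] at this
  have hKHP : ∀ i, P * (K i)ᴴ * P = (K i)ᴴ * P := by
    intro i
    have := hPfix ((K i)ᴴ) (hcommH i)
    rwa [← Matrix.mul_assoc] at this
  have hPK : ∀ i, P * K i = K i * P := by
    intro i
    have h1 := congrArg Matrix.conjTranspose (hKHP i)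
    simp only [Matrix.conjTranspose_mul, Matrix.conjTranspose_conjTranspose, hPherm.eq] at h1
    -- h1 : P * (K i * P) = P * K i
    rw [← Matrix.mul_assoc] at h1
    rw [← h1, hKP i]
  refine ⟨?_, hPK⟩
  calc ∑ i, K i * P * (K i)ᴴ = ∑ i, P * (K i * (K i)ᴴ) := by
        refine Finset.sum_congr rfl fun i _ => ?_
        rw [← hPK i]; noncomm_ring
    _ = P := by rw [← Finset.mul_sum, hunital, mul_one]
end

section
/- Let d and m be positive integers and let U_1, …, U_d and V_1, …, V_d be unitaries on ℂ^m satisfying U_x V_y = V_y U_x for all x, y. Then there exists a unitary W on ℂ^m ⊗ ℂ^d such that for every density matrix ρ on ℂ^m: Tr_B(W(ρ ⊗ (1/d)I_d)W†) = (1/d²) ∑_{x=1}^d ∑_{y=1}^d V_y U_x ρ U_x† V_y† and Tr_A(W(ρ ⊗ (1/d)I_d)W†) = (1/d)I_d. (A quantum catalyst in the d-dimensional maximally mixed state can implement two independent consecutive mutually commuting rank-d random unitary operations.) -/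
open scoped Matrix Kronecker BigOperators Classical ComplexOrder

/-!
`W` couples system and catalyst through two mutually unbiased bases of the catalyst. First `U_c`
is applied controlled on the computational basis state `|c⟩` of the catalyst; since the catalyst is maximally mixed this
yields `(1/d) ∑_c U_c ρ U_c† ⊗ |c⟩⟨c|`. Then `V_y` is applied controlled on the Fourier basis
state `|f_y⟩`. As `|⟨f_y|c⟩|² = 1/d`, tracing out the catalyst averages over `y` and `c`
uniformly. Tracing out the system instead, the commutation `U_c V_y = V_y U_c` removes `U_c` from
`tr(V_y U_c ρ U_c† V_{y'}†)`, the sum over `c` restores `∑_c |c⟩⟨c| = 1`, and orthogonality of the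
Fourier projections leaves `(1/d) ∑_y |f_y⟩⟨f_y| = 1/d`.
-/

open Matrix

section PartialTrace

variable {α β ι : Type*}

lemma trFst_kronecker [Fintype α] (A : Matrix α α ℂ) (B : Matrix β β ℂ) :
    trFst (A ⊗ₖ B) = A.trace • B := by
  ext k l
  simp [trFst, trace, Finset.sum_mul]

lemma trSnd_kronecker [Fintype β] (A : Matrix α α ℂ) (B : Matrix β β ℂ) :
    trSnd (A ⊗ₖ B) = B.trace • A := by
  ext i j
  simp [trSnd, trace, Finset.mul_sum, mul_comm]

lemma trFst_sum [Fintype α] (s : Finset ι) (M : ι → Matrix (α × β) (α × β) ℂ) :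
    trFst (∑ i ∈ s, M i) = ∑ i ∈ s, trFst (M i) := by
  ext k l
  simp only [trFst, of_apply, Matrix.sum_apply]
  exact Finset.sum_comm

lemma trSnd_sum [Fintype β] (s : Finset ι) (M : ι → Matrix (α × β) (α × β) ℂ) :
    trSnd (∑ i ∈ s, M i) = ∑ i ∈ s, trSnd (M i) := by
  ext k l
  simp only [trSnd, of_apply, Matrix.sum_apply]
  exact Finset.sum_comm

end PartialTrace

section Unitary

variable {n : Type*} [Fintype n] [DecidableEq n]

lemma IsUnitary.mul {A B : Matrix n n ℂ} (hA : IsUnitary A) (hB : IsUnitary B) :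
    IsUnitary (A * B) := by
  constructor
  · calc A * B * (A * B)ᴴ = A * (B * Bᴴ) * Aᴴ := by
          simp only [conjTranspose_mul, Matrix.mul_assoc]
      _ = 1 := by rw [hB.1, Matrix.mul_one, hA.1]
  · calc (A * B)ᴴ * (A * B) = Bᴴ * (Aᴴ * A) * B := by
          simp only [conjTranspose_mul, Matrix.mul_assoc]
      _ = 1 := by rw [hA.2, Matrix.mul_one, hB.2]

lemma IsUnitary.commute_conjTranspose {U V : Matrix n n ℂ} (hV : IsUnitary V)
    (h : Commute U V) : Commute U Vᴴ :=
  calc U * Vᴴ = Vᴴ * (V * U) * Vᴴ := by rw [← Matrix.mul_assoc, hV.2, Matrix.one_mul]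
    _ = Vᴴ * (U * V) * Vᴴ := by rw [h.eq]
    _ = Vᴴ * U := by rw [Matrix.mul_assoc, Matrix.mul_assoc, hV.1, Matrix.mul_one]

lemma trace_mul_conj_mul_of_commute {U A B : Matrix n n ℂ} (hU : Uᴴ * U = 1)
    (hA : Commute U A) (hB : Commute U B) (X : Matrix n n ℂ) :
    (A * (U * X * Uᴴ) * B).trace = (B * A * X).trace :=
  calc (A * (U * X * Uᴴ) * B).trace = (B * A * U * X * Uᴴ).trace := by
        rw [trace_mul_comm]; simp only [Matrix.mul_assoc]
    _ = (U * (B * A * X) * Uᴴ).trace := by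
        rw [Matrix.mul_assoc B A U, ← hA.eq, ← Matrix.mul_assoc, ← hB.eq]
        simp only [Matrix.mul_assoc]
    _ = (B * A * X).trace := by rw [trace_mul_comm, ← Matrix.mul_assoc, hU, Matrix.one_mul]

lemma trace_conj_single_mul_single (F : Matrix n n ℂ) (i j : n) :
    (F * single i i 1 * Fᴴ * single j j 1).trace = F j i * star (F j i) := by
  simp [trace_mul_single, Matrix.mul_apply, single_apply, ite_and]

end Unitary

lemma Matrix.kronecker_sum {R l m n p ι : Type*} [CommSemiring R] (s : Finset ι)
    (A : Matrix l m R) (B : ι → Matrix n p R) :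
    A ⊗ₖ (∑ i ∈ s, B i) = ∑ i ∈ s, A ⊗ₖ B i :=
  map_sum (kroneckerBilinear (R := R) A) B s

section Controlled

variable {m n ι κ : Type*}

def controlled [Fintype ι] (A : ι → Matrix m m ℂ) (Q : ι → Matrix n n ℂ) :
    Matrix (m × n) (m × n) ℂ :=
  ∑ i, A i ⊗ₖ Q i

lemma controlled_mul_kronecker_mul_controlled [Fintype m] [Fintype n] [Fintype ι] [Fintype κ]
    (A : ι → Matrix m m ℂ) (B : κ → Matrix m m ℂ) (Q : ι → Matrix n n ℂ)
    (S : κ → Matrix n n ℂ) (X : Matrix m m ℂ) (T : Matrix n n ℂ) :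
    controlled A Q * (X ⊗ₖ T) * controlled B S =
      ∑ i, ∑ j, (A i * X * B j) ⊗ₖ (Q i * T * S j) := by
  simp only [controlled, Finset.sum_mul, Finset.mul_sum, mul_kronecker_mul]
  exact Finset.sum_comm

variable [Fintype n] [DecidableEq n] [Fintype ι] [DecidableEq ι]

structure IsProjectiveMeasurement (Q : ι → Matrix n n ℂ) : Prop where
  conjTranspose_eq : ∀ i, (Q i)ᴴ = Q i
  mul_eq_ite : ∀ i j, Q i * Q j = if i = j then Q i else 0
  sum_eq_one : ∑ i, Q i = 1

lemma isProjectiveMeasurement_single :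
    IsProjectiveMeasurement fun i : n => single i i (1 : ℂ) where
  conjTranspose_eq i := by simp
  mul_eq_ite i j := by split_ifs with h <;> simp [h]
  sum_eq_one := by
    rw [← diagonal_one]
    exact sum_single_eq_diagonal fun _ => 1

lemma IsProjectiveMeasurement.conj {Q : ι → Matrix n n ℂ} (hQ : IsProjectiveMeasurement Q)
    {F : Matrix n n ℂ} (hF : IsUnitary F) : IsProjectiveMeasurement fun i => F * Q i * Fᴴ where
  conjTranspose_eq i := by simp [hQ.conjTranspose_eq, Matrix.mul_assoc]
  mul_eq_ite i j := by
    calc F * Q i * Fᴴ * (F * Q j * Fᴴ) = F * (Q i * (Fᴴ * F) * Q j) * Fᴴ := by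
          simp only [Matrix.mul_assoc]
      _ = _ := by rw [hF.2, Matrix.mul_one, hQ.mul_eq_ite]; split_ifs <;> simp
  sum_eq_one := by rw [← Finset.sum_mul, ← Finset.mul_sum, hQ.sum_eq_one, Matrix.mul_one, hF.1]

lemma conjTranspose_controlled {Q : ι → Matrix n n ℂ} (hQ : IsProjectiveMeasurement Q)
    (A : ι → Matrix m m ℂ) : (controlled A Q)ᴴ = controlled (fun i => (A i)ᴴ) Q := by
  simp [controlled, conjTranspose_sum, conjTranspose_kronecker, hQ.conjTranspose_eq]

lemma controlled_mul_controlled [Fintype m] {Q : ι → Matrix n n ℂ}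
    (hQ : IsProjectiveMeasurement Q) (A B : ι → Matrix m m ℂ) :
    controlled A Q * controlled B Q = controlled (fun i => A i * B i) Q := by
  simp [controlled, Finset.sum_mul_sum, ← mul_kronecker_mul, hQ.mul_eq_ite, apply_ite]

lemma controlled_one [DecidableEq m] {Q : ι → Matrix n n ℂ} (hQ : IsProjectiveMeasurement Q) :
    controlled (fun _ => (1 : Matrix m m ℂ)) Q = 1 := by
  rw [controlled, ← kronecker_sum, hQ.sum_eq_one, one_kronecker_one]

lemma IsProjectiveMeasurement.isUnitary_controlled [Fintype m] [DecidableEq m]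
    {Q : ι → Matrix n n ℂ} (hQ : IsProjectiveMeasurement Q) {A : ι → Matrix m m ℂ}
    (hA : ∀ i, IsUnitary (A i)) : IsUnitary (controlled A Q) := by
  simp only [IsUnitary, conjTranspose_controlled hQ, controlled_mul_controlled hQ,
    fun i => (hA i).1, fun i => (hA i).2, controlled_one hQ, and_self]

lemma controlled_conj_kronecker_one [Fintype m] {Q : ι → Matrix n n ℂ}
    (hQ : IsProjectiveMeasurement Q) (A : ι → Matrix m m ℂ) (X : Matrix m m ℂ) :
    controlled A Q * (X ⊗ₖ 1) * (controlled A Q)ᴴ = ∑ i, (A i * X * (A i)ᴴ) ⊗ₖ Q i := by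
  rw [conjTranspose_controlled hQ, controlled_mul_kronecker_mul_controlled]
  simp [hQ.mul_eq_ite, apply_ite]

lemma controlled_conj_sum_kronecker [Fintype m] [Fintype κ] {S : ι → Matrix n n ℂ}
    (hS : IsProjectiveMeasurement S) (B : ι → Matrix m m ℂ) (σ : κ → Matrix m m ℂ)
    (Q : κ → Matrix n n ℂ) :
    controlled B S * (∑ k, σ k ⊗ₖ Q k) * (controlled B S)ᴴ =
      ∑ k, ∑ i, ∑ j, (B i * σ k * (B j)ᴴ) ⊗ₖ (S i * Q k * S j) := by
  simp only [conjTranspose_controlled hS, Finset.mul_sum, Finset.sum_mul,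
    controlled_mul_kronecker_mul_controlled]

lemma trSnd_controlled_conj [Fintype m] [Fintype κ] {S : ι → Matrix n n ℂ}
    (hS : IsProjectiveMeasurement S) {Q : κ → Matrix n n ℂ} {r : ℂ}
    (hSQ : ∀ i k, (S i * Q k).trace = r) (B : ι → Matrix m m ℂ) (σ : κ → Matrix m m ℂ) :
    trSnd (controlled B S * (∑ k, σ k ⊗ₖ Q k) * (controlled B S)ᴴ) =
      r • ∑ k, ∑ i, B i * σ k * (B i)ᴴ := by
  have htrace : ∀ k i j, (S i * Q k * S j).trace = if j = i then r else 0 := by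
    intro k i j
    rw [trace_mul_cycle, hS.mul_eq_ite]
    split_ifs with h
    · rw [h, hSQ]
    · simp
  simp [controlled_conj_sum_kronecker hS, trSnd_sum, trSnd_kronecker, htrace, ite_smul,
    Finset.smul_sum]

lemma trFst_controlled_conj [Fintype m] [Fintype κ] {S : ι → Matrix n n ℂ}
    (hS : IsProjectiveMeasurement S) {Q : κ → Matrix n n ℂ} (hQ : ∑ k, Q k = 1)
    (B : ι → Matrix m m ℂ) (σ : κ → Matrix m m ℂ) {t : ι → ι → ℂ}
    (ht : ∀ k i j, (B i * σ k * (B j)ᴴ).trace = t i j) :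
    trFst (controlled B S * (∑ k, σ k ⊗ₖ Q k) * (controlled B S)ᴴ) = ∑ i, t i i • S i := by
  simp only [controlled_conj_sum_kronecker hS, trFst_sum, trFst_kronecker, ht]
  rw [Finset.sum_comm]
  refine Finset.sum_congr rfl fun i _ => ?_
  rw [Finset.sum_comm]
  simp only [← Finset.smul_sum, ← Finset.mul_sum, ← Finset.sum_mul, hQ, Matrix.mul_one,
    hS.mul_eq_ite, smul_ite, smul_zero, Finset.sum_ite_eq, Finset.mem_univ, if_true]

end Controlled

section Fourier

lemma IsPrimitiveRoot.sum_pow_mul_inv_pow {K : Type*} [Field K] {ζ : K} {d : ℕ}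
    (hζ : IsPrimitiveRoot ζ d) (a b : Fin d) :
    ∑ c : Fin d, ζ ^ ((a : ℕ) * c) * (ζ ^ ((b : ℕ) * c))⁻¹ = if a = b then (d : K) else 0 := by
  have hζ0 : ζ ≠ 0 := hζ.ne_zero (Fin.pos a).ne'
  have hterm : ∀ c : ℕ,
      ζ ^ ((a : ℕ) * c) * (ζ ^ ((b : ℕ) * c))⁻¹ = (ζ ^ (a : ℕ) / ζ ^ (b : ℕ)) ^ c := by
    intro c
    rw [div_pow, ← pow_mul, ← pow_mul, div_eq_mul_inv]
  simp only [hterm]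
  rw [Fin.sum_univ_eq_sum_range (fun c => (ζ ^ (a : ℕ) / ζ ^ (b : ℕ)) ^ c)]
  split_ifs with hab
  · simp [hab, hζ0]
  · have hne : ζ ^ (a : ℕ) / ζ ^ (b : ℕ) ≠ 1 := by
      rw [Ne, div_eq_one_iff_eq (pow_ne_zero _ hζ0)]
      exact fun h => hab (Fin.ext (hζ.pow_inj a.isLt b.isLt h))
    have hpow : (ζ ^ (a : ℕ) / ζ ^ (b : ℕ)) ^ d = 1 := by
      rw [div_pow, ← pow_mul, ← pow_mul, mul_comm _ d, mul_comm _ d, pow_mul, pow_mul,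
        hζ.pow_eq_one, one_pow, one_pow, div_one]
    rw [geom_sum_eq hne, hpow, sub_self, zero_div]

noncomputable def fourierMatrix (d : ℕ) : Matrix (Fin d) (Fin d) ℂ :=
  of fun a b =>
    ((Real.sqrt d : ℝ) : ℂ)⁻¹ * Complex.exp (2 * Real.pi * Complex.I / d) ^ ((a : ℕ) * b)

lemma norm_exp_two_pi_I_div (d : ℕ) : ‖Complex.exp (2 * Real.pi * Complex.I / d)‖ = 1 := by
  rw [show 2 * Real.pi * Complex.I / d = ((2 * Real.pi / d : ℝ) : ℂ) * Complex.I by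
    push_cast; ring]
  exact Complex.norm_exp_ofReal_mul_I _

lemma fourierMatrix_mul_star_self (d : ℕ) (a b : Fin d) :
    fourierMatrix d a b * star (fourierMatrix d a b) = (d : ℂ)⁻¹ := by
  rw [Complex.star_def, Complex.mul_conj']
  simp [fourierMatrix, norm_exp_two_pi_I_div, sq_abs, ← Complex.ofReal_pow]

lemma isUnitary_fourierMatrix {d : ℕ} (hd : 0 < d) : IsUnitary (fourierMatrix d) := by
  set ω := Complex.exp (2 * Real.pi * Complex.I / d)
  have hω : IsPrimitiveRoot ω d := Complex.isPrimitiveRoot_exp d hd.ne'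
  have hstar : ∀ k : ℕ, star (ω ^ k) = (ω ^ k)⁻¹ := fun k =>
    (Complex.inv_eq_conj (by rw [norm_pow, norm_exp_two_pi_I_div, one_pow])).symm
  set s : ℂ := ((Real.sqrt d : ℝ) : ℂ)⁻¹
  have hs : s * star s = (d : ℂ)⁻¹ := by
    rw [Complex.star_def, Complex.mul_conj']
    simp [s, ← Complex.ofReal_pow]
  have hF : fourierMatrix d * (fourierMatrix d)ᴴ = 1 := by
    ext a b
    have hterm : ∀ c : Fin d, fourierMatrix d a c * star (fourierMatrix d b c) =
        (d : ℂ)⁻¹ * (ω ^ ((a : ℕ) * c) * (ω ^ ((b : ℕ) * c))⁻¹) := by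
      intro c
      rw [← hs, ← hstar]
      simp only [fourierMatrix, of_apply, star_mul']
      ring
    simp only [mul_apply, conjTranspose_apply, hterm, ← Finset.mul_sum, hω.sum_pow_mul_inv_pow,
      one_apply]
    split_ifs <;> simp [hd.ne']
  exact ⟨hF, mul_eq_one_comm.mp hF⟩

end Fourier

theorem stmt7_general {d m : ℕ} (hd : 0 < d)
    (U V : Fin d → Matrix (Fin m) (Fin m) ℂ)
    (hU : ∀ x, IsUnitary (U x)) (hV : ∀ y, IsUnitary (V y))
    (hcomm : ∀ x y, U x * V y = V y * U x) :
    ∃ W : Matrix (Fin m × Fin d) (Fin m × Fin d) ℂ, IsUnitary W ∧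
      ∀ ρ : Matrix (Fin m) (Fin m) ℂ, IsDensity ρ →
        trSnd (W * (ρ ⊗ₖ ((d : ℂ)⁻¹ • (1 : Matrix (Fin d) (Fin d) ℂ))) * Wᴴ) =
          ((d : ℂ) ^ 2)⁻¹ • ∑ x, ∑ y, V y * U x * ρ * (U x)ᴴ * (V y)ᴴ ∧
        trFst (W * (ρ ⊗ₖ ((d : ℂ)⁻¹ • (1 : Matrix (Fin d) (Fin d) ℂ))) * Wᴴ) =
          (d : ℂ)⁻¹ • (1 : Matrix (Fin d) (Fin d) ℂ) := by
  set F := fourierMatrix d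
  set E : Fin d → Matrix (Fin d) (Fin d) ℂ := fun c => single c c 1
  have hE : IsProjectiveMeasurement E := isProjectiveMeasurement_single
  have hP : IsProjectiveMeasurement fun y => F * E y * Fᴴ :=
    hE.conj (isUnitary_fourierMatrix hd)
  refine ⟨controlled V (fun y => F * E y * Fᴴ) * controlled U E,
    (hP.isUnitary_controlled hV).mul (hE.isUnitary_controlled hU), fun ρ hρ => ?_⟩
  have hstate : ∀ W₂ : Matrix (Fin m × Fin d) (Fin m × Fin d) ℂ,
      W₂ * controlled U E * (ρ ⊗ₖ ((d : ℂ)⁻¹ • 1)) * (W₂ * controlled U E)ᴴ =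
        W₂ * (∑ c, (U c * ((d : ℂ)⁻¹ • ρ) * (U c)ᴴ) ⊗ₖ E c) * W₂ᴴ := by
    intro W₂
    rw [kronecker_smul, ← smul_kronecker, ← controlled_conj_kronecker_one hE, conjTranspose_mul]
    simp only [Matrix.mul_assoc]
  rw [hstate]
  constructor
  · rw [trSnd_controlled_conj hP (r := (d : ℂ)⁻¹)
      (fun y c => (trace_conj_single_mul_single F y c).trans (fourierMatrix_mul_star_self d c y))]
    simp only [Matrix.mul_smul, Matrix.smul_mul, Finset.smul_sum, smul_smul, sq, mul_inv,
      Matrix.mul_assoc]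
  · rw [trFst_controlled_conj hP hE.sum_eq_one V _
      (t := fun y y' => ((V y')ᴴ * V y * ((d : ℂ)⁻¹ • ρ)).trace)
      (fun c y y' => trace_mul_conj_mul_of_commute (hU c).2 (hcomm c y)
        ((hV y').commute_conjTranspose (hcomm c y')) _)]
    simp [(hV _).2, hρ.2, ← Finset.smul_sum, hP.sum_eq_one]

/-- Corollary 2: a quantum catalyst in the `d`-dimensional maximally mixed state can implement
two independent consecutive mutually commuting rank-`d` random unitary operations. -/
theorem stmt7 {d m : ℕ} (hd : 0 < d) (hm : 0 < m)
    (U V : Fin d → Matrix (Fin m) (Fin m) ℂ)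
    (hU : ∀ x, IsUnitary (U x)) (hV : ∀ y, IsUnitary (V y))
    (hcomm : ∀ x y, U x * V y = V y * U x) :
    ∃ W : Matrix (Fin m × Fin d) (Fin m × Fin d) ℂ, IsUnitary W ∧
      ∀ ρ : Matrix (Fin m) (Fin m) ℂ, IsDensity ρ →
        trSnd (W * (ρ ⊗ₖ ((d : ℂ)⁻¹ • (1 : Matrix (Fin d) (Fin d) ℂ))) * Wᴴ) =
          ((d : ℂ) ^ 2)⁻¹ • ∑ x, ∑ y, V y * U x * ρ * (U x)ᴴ * (V y)ᴴ ∧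
        trFst (W * (ρ ⊗ₖ ((d : ℂ)⁻¹ • (1 : Matrix (Fin d) (Fin d) ℂ))) * Wᴴ) =
          (d : ℂ)⁻¹ • (1 : Matrix (Fin d) (Fin d) ℂ) :=
  stmt7_general hd U V hU hV hcomm
end

section
/- Let r₁, …, r_n be positive integers, let α ∈ (0,1) ∪ (1,∞), and let λ₁, …, λ_n be nonnegative reals with ∑_i λ_i r_i = 1. Then (1/(1−α)) log₂ ∑_i λ_i^α r_i^{2−α} ≤ 2 log₂ ‖r‖₂, where ‖r‖₂ = √(∑_i r_i²); moreover equality holds for the choice λ_i = r_i / ∑_j r_j². (For a catalysis with degeneracy vector (r₁, …, r_n), the maximal catalytic Rényi entropy of a compatible catalyst is 2 log₂ ‖r‖₂.) -/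
open scoped Matrix Kronecker BigOperators Classical ComplexOrder

/-!
With `pᵢ = λᵢ rᵢ` (a probability vector) and `wᵢ = rᵢ²`, the sum is `∑ wᵢ (pᵢ / wᵢ)^α`, and the
bound says that the Rényi divergence of `p` from `w / ‖r‖₂²` is nonnegative. Both directions
(`α < 1` and `α > 1`) are instances of the weighted Hölder inequality
`∑ wᵢ fᵢ ≤ (∑ wᵢ)^(1 - 1/q) (∑ wᵢ fᵢ^q)^(1/q)`, with `q = 1/α, fᵢ = (pᵢ/wᵢ)^α` resp.
`q = α, fᵢ = pᵢ/wᵢ`. Equality holds when `p` is proportional to `w`.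
-/

open Real Finset

section WeightedPowerSum

variable {ι : Type*} (s : Finset ι) {α : ℝ} {p w : ι → ℝ}

theorem sum_mul_div_rpow_le (hα0 : 0 < α) (hα1 : α ≤ 1) (hp : ∀ i, 0 ≤ p i)
    (hw : ∀ i, 0 < w i) :
    ∑ i ∈ s, w i * (p i / w i) ^ α ≤ (∑ i ∈ s, w i) ^ (1 - α) * (∑ i ∈ s, p i) ^ α := by
  have holder := inner_le_weight_mul_Lp_of_nonneg s (one_le_inv_iff₀.2 ⟨hα0, hα1⟩) w
    (fun i => (p i / w i) ^ α) (fun i => (hw i).le)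
    (fun i => rpow_nonneg (div_nonneg (hp i) (hw i).le) _)
  have hcancel : ∀ i, w i * ((p i / w i) ^ α) ^ α⁻¹ = p i := fun i => by
    rw [← rpow_mul (div_nonneg (hp i) (hw i).le), mul_inv_cancel₀ hα0.ne', rpow_one,
      mul_div_cancel₀ _ (hw i).ne']
  simpa only [hcancel, inv_inv] using holder

theorem rpow_sum_le_mul_sum_mul_div_rpow (hα1 : 1 ≤ α) (hp : ∀ i, 0 ≤ p i)
    (hw : ∀ i, 0 < w i) :
    (∑ i ∈ s, p i) ^ α ≤ (∑ i ∈ s, w i) ^ (α - 1) * ∑ i ∈ s, w i * (p i / w i) ^ α := by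
  have hα0 : 0 < α := zero_lt_one.trans_le hα1
  have holder := inner_le_weight_mul_Lp_of_nonneg s hα1 w (fun i => p i / w i)
    (fun i => (hw i).le) (fun i => div_nonneg (hp i) (hw i).le)
  simp only [mul_div_cancel₀ _ (hw _).ne'] at holder
  have hW : 0 ≤ ∑ i ∈ s, w i := sum_nonneg fun i _ => (hw i).le
  have hS : 0 ≤ ∑ i ∈ s, w i * (p i / w i) ^ α :=
    sum_nonneg fun i _ => mul_nonneg (hw i).le (rpow_nonneg (div_nonneg (hp i) (hw i).le) _)
  calc (∑ i ∈ s, p i) ^ α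
      ≤ ((∑ i ∈ s, w i) ^ (1 - α⁻¹) * (∑ i ∈ s, w i * (p i / w i) ^ α) ^ α⁻¹) ^ α :=
        rpow_le_rpow (sum_nonneg fun i _ => hp i) holder hα0.le
    _ = (∑ i ∈ s, w i) ^ (α - 1) * ∑ i ∈ s, w i * (p i / w i) ^ α := by
        rw [mul_rpow (rpow_nonneg hW _) (rpow_nonneg hS _), ← rpow_mul hW, ← rpow_mul hS,
          inv_mul_cancel₀ hα0.ne', rpow_one, sub_mul, one_mul, inv_mul_cancel₀ hα0.ne']

theorem inv_one_sub_mul_logb_sum_mul_div_rpow_le {b : ℝ} (hb : 1 < b) (hα0 : 0 < α)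
    (hα1 : α ≠ 1) (hp : ∀ i, 0 ≤ p i) (hw : ∀ i, 0 < w i) (hP : ∑ i ∈ s, p i = 1) :
    (1 - α)⁻¹ * logb b (∑ i ∈ s, w i * (p i / w i) ^ α) ≤ logb b (∑ i ∈ s, w i) := by
  have hs : s.Nonempty := nonempty_of_sum_ne_zero (hP ▸ one_ne_zero)
  have hW : 0 < ∑ i ∈ s, w i := sum_pos (fun i _ => hw i) hs
  obtain ⟨j, hj, hpj⟩ : ∃ j ∈ s, 0 < p j := by
    by_contra! h
    linarith [sum_nonpos h]
  have hS : 0 < ∑ i ∈ s, w i * (p i / w i) ^ α :=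
    sum_pos' (fun i _ => mul_nonneg (hw i).le (rpow_nonneg (div_nonneg (hp i) (hw i).le) _))
      ⟨j, hj, mul_pos (hw j) (rpow_pos_of_pos (div_pos hpj (hw j)) _)⟩
  rw [inv_mul_eq_div]
  rcases hα1.lt_or_gt with hlt | hgt
  · have key := sum_mul_div_rpow_le s hα0 hlt.le hp hw
    rw [hP, one_rpow, mul_one] at key
    rw [div_le_iff₀ (sub_pos.2 hlt), mul_comm, ← logb_rpow_eq_mul_logb_of_pos hW]
    exact logb_le_logb_of_le hb hS key
  · have key := rpow_sum_le_mul_sum_mul_div_rpow s hgt.le hp hw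
    rw [hP, one_rpow] at key
    have hlog := logb_le_logb_of_le hb one_pos key
    rw [logb_one, logb_mul (rpow_pos_of_pos hW _).ne' hS.ne',
      logb_rpow_eq_mul_logb_of_pos hW] at hlog
    rw [div_le_iff_of_neg (sub_neg.2 hgt)]
    linarith

end WeightedPowerSum

theorem rpow_mul_rpow_two_sub_eq {x y : ℝ} (hx : 0 ≤ x) (hy : 0 < y) (α : ℝ) :
    x ^ α * y ^ (2 - α) = y ^ 2 * (x * y / y ^ 2) ^ α := by
  rw [sq, mul_div_mul_right _ _ hy.ne', div_rpow hx hy.le, rpow_sub hy, rpow_two]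
  ring

theorem div_rpow_mul_rpow_two_sub_eq {y c : ℝ} (hy : 0 ≤ y) (hc : 0 ≤ c) (α : ℝ) :
    (y / c) ^ α * y ^ (2 - α) = y ^ 2 / c ^ α := by
  rw [div_rpow hy hc, div_mul_eq_mul_div, ← rpow_add' hy (by norm_num), add_sub_cancel,
    rpow_two]

theorem two_mul_logb_sqrt {b x : ℝ} (hx : 0 ≤ x) : 2 * logb b √x = logb b x := by
  have h := logb_pow b √x 2
  rw [sq_sqrt hx, Nat.cast_ofNat] at h
  exact h.symm

/-- Corollary 6: for a catalysis with degeneracy vector `(r₁,…,r_n)`, the maximal catalytic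
Rényi entropy of a compatible catalyst is `2 log₂ ‖r‖₂`, achieved at `λᵢ = rᵢ/∑ⱼ rⱼ²`. -/
theorem stmt14 {n : ℕ} (r : Fin n → ℕ) (hr : ∀ i, 0 < r i)
    (α : ℝ) (hα0 : 0 < α) (hα1 : α ≠ 1)
    (lam : Fin n → ℝ) (hlam : ∀ i, 0 ≤ lam i)
    (hsum : ∑ i, lam i * (r i : ℝ) = 1) :
    (1 - α)⁻¹ * Real.logb 2 (∑ i, lam i ^ α * (r i : ℝ) ^ (2 - α)) ≤
      2 * Real.logb 2 (Real.sqrt (∑ i, (r i : ℝ) ^ 2)) ∧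
    (1 - α)⁻¹ * Real.logb 2
        (∑ i, ((r i : ℝ) / (∑ j, (r j : ℝ) ^ 2)) ^ α * (r i : ℝ) ^ (2 - α)) =
      2 * Real.logb 2 (Real.sqrt (∑ i, (r i : ℝ) ^ 2)) := by
  have hr' : ∀ i, (0 : ℝ) < r i := fun i => Nat.cast_pos.2 (hr i)
  have hR : 0 < ∑ i, (r i : ℝ) ^ 2 :=
    sum_pos (fun i _ => pow_pos (hr' i) 2) (nonempty_of_sum_ne_zero (hsum ▸ one_ne_zero))
  have h1α : 1 - α ≠ 0 := sub_ne_zero.2 hα1.symm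
  rw [two_mul_logb_sqrt hR.le]
  constructor
  · simp only [rpow_mul_rpow_two_sub_eq (hlam _) (hr' _)]
    exact inv_one_sub_mul_logb_sum_mul_div_rpow_le univ one_lt_two hα0 hα1
      (fun i => mul_nonneg (hlam i) (hr' i).le) (fun i => pow_pos (hr' i) 2) hsum
  · rw [sum_congr rfl fun i _ => div_rpow_mul_rpow_two_sub_eq (hr' i).le hR.le α, ← sum_div,
      ← rpow_one_sub' hR.le h1α, logb_rpow_eq_mul_logb_of_pos hR, inv_mul_cancel_left₀ h1α]
end

section
/- Let U be a unitary on ℂ^a ⊗ ℂ^b (systems AB) and σ a density matrix on ℂ^b such that U commutes with I_a ⊗ σ. Let |Γ⟩ = ∑_{k} e_k ⊗ e_k ∈ ℂ^b ⊗ ℂ^b and let σ_{BC} = (√σ ⊗ I_b)|Γ⟩⟨Γ|(√σ ⊗ I_b) be the standard purification of σ on systems BC, where √σ is the positive semidefinite square root of σ. Define the operator V on ℂ^a ⊗ ℂ^b ⊗ ℂ^b acting as the identity on the middle (B) factor and as the partial transpose of U over its second index on the A and C factors; explicitly, V has entries V_{(i,k,m),(j,l,n)} = δ_{k,l} U_{(i,n),(j,m)}.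 Then for every complex a×a matrix κ: (U ⊗ I_b)(κ ⊗ σ_{BC})(U ⊗ I_b)† = V(κ ⊗ σ_{BC})V†. (The partial transpose of a catalysis unitary acts on AC as the recovery map of the information encoded by U into the correlation of AB.) -/
/-!
Write `σ_BC = |ψ⟩⟨ψ|` with `ψ (k, m) = (√σ) k m`. Both sides of the identity only depend on how
the outer unitary contracts against `ψ` on the `BC` slots: `U ⊗ 1_C` contracts to `U (1 ⊗ √σ)`,
while its partial transpose `V` contracts to `(1 ⊗ √σ) U` (the transpose trick
`(X ⊗ 1)|Γ⟩ = (1 ⊗ Xᵀ)|Γ⟩`). These agree because `√σ` is a continuous function of `σ`, so `U`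
commutes with `1 ⊗ √σ` as soon as it commutes with `1 ⊗ σ`.
-/

open scoped Matrix Kronecker BigOperators Classical ComplexOrder

/-- The positive semidefinite square root (the definition removed from Mathlib, restored). -/
noncomputable def Matrix.PosSemidef.sqrt {n : Type*} [Fintype n] [DecidableEq n]
    {A : Matrix n n ℂ} (hA : A.PosSemidef) : Matrix n n ℂ :=
  hA.1.eigenvectorUnitary.1 * Matrix.diagonal ((↑) ∘ (√·) ∘ hA.1.eigenvalues) *
    (star hA.1.eigenvectorUnitary : Matrix n n ℂ)

open scoped MatrixOrder

namespace Matrix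

theorem PosSemidef.sqrt_eq_cfc_sqrt {n : Type*} [Fintype n] [DecidableEq n]
    {A : Matrix n n ℂ} (hA : A.PosSemidef) : hA.sqrt = CFC.sqrt A := by
  unfold PosSemidef.sqrt
  rw [CFC.sqrt_eq_cfc, cfc_nnreal_eq_real _ A, hA.1.cfc_eq, IsHermitian.cfc,
    Unitary.conjStarAlgAut_apply]
  have hx : ∀ x : ℝ, ((NNReal.sqrt x.toNNReal : ℝ)) = √x := fun x => (Real.sqrt.eq_1 x).symm
  simp only [hx]
  rfl

theorem mul_kronecker_vecMulVec_mul_conjTranspose_apply {α β : Type*} [Fintype α] [Fintype β]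
    (X : Matrix (α × β) (α × β) ℂ) (κ : Matrix α α ℂ) (ψ : β → ℂ) (p q : α × β) :
    (X * (κ ⊗ₖ vecMulVec ψ (star ψ)) * Xᴴ) p q =
      ∑ i, ∑ j, (∑ x, X p (i, x) * ψ x) * κ i j * star (∑ y, X q (j, y) * ψ y) := by
  simp only [mul_apply, conjTranspose_apply, kroneckerMap_apply, vecMulVec_apply,
    Fintype.sum_prod_type, Finset.sum_mul, Finset.mul_sum, star_sum, star_mul', Pi.star_apply]
  conv_lhs => enter [2, j]; rw [Finset.sum_comm]
  rw [Finset.sum_comm]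
  refine Finset.sum_congr rfl fun i _ => Finset.sum_congr rfl fun j _ =>
    Finset.sum_congr rfl fun y _ => Finset.sum_congr rfl fun x _ => by ring

theorem kronecker_one_conj_maxEntangled_eq_vecMulVec {β : Type*} [Fintype β] [DecidableEq β]
    {s : Matrix β β ℂ} (hs : s.IsHermitian) :
    (s ⊗ₖ (1 : Matrix β β ℂ)) *
        (of fun p q : β × β =>
          (if p.1 = p.2 then (1 : ℂ) else 0) * (if q.1 = q.2 then 1 else 0)) *
        (s ⊗ₖ (1 : Matrix β β ℂ)) =
      vecMulVec (fun p => s p.1 p.2) (star fun p => s p.1 p.2) := by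
  ext ⟨k, m⟩ ⟨l, n⟩
  simp [mul_apply, kroneckerMap_apply, one_apply, vecMulVec_apply, Fintype.sum_prod_type,
    ← hs.apply l n]

end Matrix

theorem CFC.sqrt_kronecker {m n : Type*} [Fintype m] [DecidableEq m] [Fintype n] [DecidableEq n]
    {A : Matrix m m ℂ} {B : Matrix n n ℂ} (hA : 0 ≤ A) (hB : 0 ≤ B) :
    CFC.sqrt (A ⊗ₖ B) = CFC.sqrt A ⊗ₖ CFC.sqrt B := by
  refine CFC.sqrt_unique ?_ ?_
  · rw [← Matrix.mul_kronecker_mul, CFC.sqrt_mul_sqrt_self A, CFC.sqrt_mul_sqrt_self B]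
  · exact ((Matrix.nonneg_iff_posSemidef.mp (CFC.sqrt_nonneg A)).kronecker
      (Matrix.nonneg_iff_posSemidef.mp (CFC.sqrt_nonneg B))).nonneg

theorem Commute.one_kronecker_sqrt_right {m n : Type*} [Fintype m] [DecidableEq m] [Fintype n]
    [DecidableEq n] {A : Matrix n n ℂ} {X : Matrix (m × n) (m × n) ℂ} (hA : 0 ≤ A)
    (h : Commute X (1 ⊗ₖ A)) : Commute X (1 ⊗ₖ CFC.sqrt A) := by
  rw [← CFC.sqrt_one (A := Matrix m m ℂ), ← CFC.sqrt_kronecker Matrix.PosSemidef.one.nonneg hA,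
    CFC.sqrt_eq_cfc]
  exact (h.symm.cfc_nnreal _).symm

section Contraction

variable {α β : Type*} [Fintype α] [DecidableEq α] [Fintype β] [DecidableEq β]
  {U : Matrix (α × β) (α × β) ℂ}

theorem sum_ampliation_apply_mul {UI : Matrix (α × β × β) (α × β × β) ℂ}
    (hUI : ∀ p q : α × β × β,
      UI p q = U (p.1, p.2.1) (q.1, q.2.1) * (if p.2.2 = q.2.2 then 1 else 0))
    (s : Matrix β β ℂ) (p : α × β × β) (i : α) :
    ∑ x : β × β, UI p (i, x) * s x.1 x.2 =
      (U * ((1 : Matrix α α ℂ) ⊗ₖ s)) (p.1, p.2.1) (i, p.2.2) := by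
  simp [hUI, Matrix.mul_apply, Matrix.one_apply, Fintype.sum_prod_type]

theorem sum_partialTranspose_apply_mul {V : Matrix (α × β × β) (α × β × β) ℂ}
    (hV : ∀ p q : α × β × β,
      V p q = (if p.2.1 = q.2.1 then (1 : ℂ) else 0) * U (p.1, q.2.2) (q.1, p.2.2))
    (s : Matrix β β ℂ) (p : α × β × β) (i : α) :
    ∑ x : β × β, V p (i, x) * s x.1 x.2 =
      (((1 : Matrix α α ℂ) ⊗ₖ s) * U) (p.1, p.2.1) (i, p.2.2) := by
  simp [hV, Matrix.mul_apply, Matrix.one_apply, Fintype.sum_prod_type, mul_comm]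

end Contraction

theorem stmt19_general {a b : ℕ} (U : Matrix (Fin a × Fin b) (Fin a × Fin b) ℂ)
    (σ : Matrix (Fin b) (Fin b) ℂ) (hσ : IsDensity σ)
    (hcomm : U * ((1 : Matrix (Fin a) (Fin a) ℂ) ⊗ₖ σ) =
      ((1 : Matrix (Fin a) (Fin a) ℂ) ⊗ₖ σ) * U)
    (σBC : Matrix (Fin b × Fin b) (Fin b × Fin b) ℂ)
    (hσBC : σBC = (hσ.1.sqrt ⊗ₖ (1 : Matrix (Fin b) (Fin b) ℂ)) *
        (Matrix.of fun p q : Fin b × Fin b =>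
          (if p.1 = p.2 then (1 : ℂ) else 0) * (if q.1 = q.2 then 1 else 0)) *
        (hσ.1.sqrt ⊗ₖ (1 : Matrix (Fin b) (Fin b) ℂ)))
    (UI : Matrix (Fin a × Fin b × Fin b) (Fin a × Fin b × Fin b) ℂ)
    (hUI : ∀ p q : Fin a × Fin b × Fin b,
      UI p q = U (p.1, p.2.1) (q.1, q.2.1) * (if p.2.2 = q.2.2 then 1 else 0))
    (V : Matrix (Fin a × Fin b × Fin b) (Fin a × Fin b × Fin b) ℂ)
    (hV : ∀ p q : Fin a × Fin b × Fin b,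
      V p q = (if p.2.1 = q.2.1 then (1 : ℂ) else 0) * U (p.1, q.2.2) (q.1, p.2.2)) :
    ∀ κ : Matrix (Fin a) (Fin a) ℂ,
      UI * (κ ⊗ₖ σBC) * UIᴴ = V * (κ ⊗ₖ σBC) * Vᴴ := by
  intro κ
  have hsqrt := hσ.1.sqrt_eq_cfc_sqrt
  have hHerm : hσ.1.sqrt.IsHermitian :=
    hsqrt ▸ (Matrix.nonneg_iff_posSemidef.mp (CFC.sqrt_nonneg σ)).isHermitian
  have hcomm_sqrt : U * ((1 : Matrix (Fin a) (Fin a) ℂ) ⊗ₖ hσ.1.sqrt) =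
      ((1 : Matrix (Fin a) (Fin a) ℂ) ⊗ₖ hσ.1.sqrt) * U :=
    hsqrt ▸ Commute.one_kronecker_sqrt_right hσ.1.nonneg hcomm
  rw [hσBC, Matrix.kronecker_one_conj_maxEntangled_eq_vecMulVec hHerm]
  ext p q
  simp only [Matrix.mul_kronecker_vecMulVec_mul_conjTranspose_apply,
    sum_ampliation_apply_mul hUI, sum_partialTranspose_apply_mul hV, hcomm_sqrt]

/-- The partial transpose of a catalysis unitary acts on `AC` as the recovery map of the
information encoded by `U` into the correlation of `AB`. -/
theorem stmt19 {a b : ℕ} (U : Matrix (Fin a × Fin b) (Fin a × Fin b) ℂ) (hU : IsUnitary U)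
    (σ : Matrix (Fin b) (Fin b) ℂ) (hσ : IsDensity σ)
    (hcomm : U * ((1 : Matrix (Fin a) (Fin a) ℂ) ⊗ₖ σ) =
      ((1 : Matrix (Fin a) (Fin a) ℂ) ⊗ₖ σ) * U)
    (σBC : Matrix (Fin b × Fin b) (Fin b × Fin b) ℂ)
    (hσBC : σBC = (hσ.1.sqrt ⊗ₖ (1 : Matrix (Fin b) (Fin b) ℂ)) *
        (Matrix.of fun p q : Fin b × Fin b =>
          (if p.1 = p.2 then (1 : ℂ) else 0) * (if q.1 = q.2 then 1 else 0)) *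
        (hσ.1.sqrt ⊗ₖ (1 : Matrix (Fin b) (Fin b) ℂ)))
    (UI : Matrix (Fin a × Fin b × Fin b) (Fin a × Fin b × Fin b) ℂ)
    (hUI : ∀ p q : Fin a × Fin b × Fin b,
      UI p q = U (p.1, p.2.1) (q.1, q.2.1) * (if p.2.2 = q.2.2 then 1 else 0))
    (V : Matrix (Fin a × Fin b × Fin b) (Fin a × Fin b × Fin b) ℂ)
    (hV : ∀ p q : Fin a × Fin b × Fin b,
      V p q = (if p.2.1 = q.2.1 then (1 : ℂ) else 0) * U (p.1, q.2.2) (q.1, p.2.2)) :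
    ∀ κ : Matrix (Fin a) (Fin a) ℂ,
      UI * (κ ⊗ₖ σBC) * UIᴴ = V * (κ ⊗ₖ σBC) * Vᴴ :=
  stmt19_general U σ hσ hcomm σBC hσBC UI hUI V hV
end
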